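/- Let Ω ⊆ ℝ^N be open, a, b ∈ ℂ with Re(a) > 0 or Im(a) ≠ 0, Im(b) ≠ 0, V ∈ L^∞(Ω), and F ∈ L^∞(Ω). Suppose u ∈ H^1(Ω) ∩ L^1(Ω) satisfies the two energy estimates: ‖∇u‖²_{L²} + Re(a)‖u‖_{L¹} + (Re(b) − ‖V‖_∞)‖u‖²_{L²} ≤ ∫|F u| dx and |Im(a)|‖u‖_{L¹} + |Im(b)|‖u‖²_{L²} ≤ ∫|F u| dx. Then there exists M > 0, depending only on |a|, |b|, ‖Re(V)‖_∞, such that if ‖F‖_{L^∞(Ω)} ≤ 1/M then u = 0 a.e. in Ω. -/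

import Mathlib

open MeasureTheory Filter
open scoped ENNReal

/-! Add `C` times the second estimate to the first, with `C ≥ 0` so large that
`α = Re a + C |Im a|` and `β = Re b - V + C |Im b|` are positive:
`α ‖u‖₁ + β ‖u‖₂² ≤ (1 + C) ∫ |F u| ≤ (1 + C) ‖F‖_∞ ‖u‖₁`.
With `M = (1 + C) / α` and `‖F‖_∞ ≤ 1 / M` the `L¹` terms cancel, leaving `β ‖u‖₂² ≤ 0`. -/

lemma eventually_pos_add_mul_abs {p q : ℝ} (h : 0 < p ∨ q ≠ 0) :
    ∀ᶠ C in atTop, 0 < p + C * |q| := by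
  rcases h with hp | hq
  · filter_upwards [eventually_ge_atTop 0] with C hC
    positivity
  · have hlim : Tendsto (fun C : ℝ => p + C * |q|) atTop atTop :=
      tendsto_atTop_add_const_left _ p (tendsto_id.atTop_mul_const (abs_pos.mpr hq))
    exact hlim.eventually_gt_atTop 0

lemma integral_norm_mul_le_lpNorm_top_mul_lpNorm_one {α R : Type*} [MeasurableSpace α]
    {μ : Measure α} [NormedRing R] {F u : α → R} (hF : MemLp F ∞ μ) (hu : MemLp u 1 μ) :
    ∫ x, ‖F x * u x‖ ∂μ ≤ lpNorm F ∞ μ * lpNorm u 1 μ :=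
  calc ∫ x, ‖F x * u x‖ ∂μ ≤ ∫ x, lpNorm F ∞ μ * ‖u x‖ ∂μ := by
        refine integral_mono_of_nonneg (ae_of_all _ fun x => norm_nonneg _)
          ((memLp_one_iff_integrable.mp hu).norm.const_mul _) ?_
        filter_upwards [ae_le_lpNorm_exponent_top hF] with x hx
        exact (norm_mul_le _ _).trans (mul_le_mul_of_nonneg_right hx (norm_nonneg _))
    _ = lpNorm F ∞ μ * lpNorm u 1 μ := by
        rw [integral_const_mul, lpNorm_one_eq_integral_norm hu.1]

theorem null_solution_from_energy_estimates_general
    (a b : ℂ) (ha : 0 < a.re ∨ a.im ≠ 0) (hb : b.im ≠ 0) (Vn : ℝ) :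
    ∃ M : ℝ, 0 < M ∧
      ∀ (N : ℕ) (Ω : Set (EuclideanSpace ℝ (Fin N))), IsOpen Ω →
        ∀ (F u : EuclideanSpace ℝ (Fin N) → ℂ)
          (du : EuclideanSpace ℝ (Fin N) → (EuclideanSpace ℝ (Fin N) →L[ℝ] ℂ)),
          MemLp F ∞ (volume.restrict Ω) →
          MemLp u 1 (volume.restrict Ω) →
          MemLp u 2 (volume.restrict Ω) →
          MemLp du 2 (volume.restrict Ω) →
          ((eLpNorm du 2 (volume.restrict Ω)).toReal ^ 2
              + a.re * (eLpNorm u 1 (volume.restrict Ω)).toReal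
              + (b.re - Vn) * (eLpNorm u 2 (volume.restrict Ω)).toReal ^ 2
            ≤ ∫ x, ‖F x * u x‖ ∂(volume.restrict Ω)) →
          (|a.im| * (eLpNorm u 1 (volume.restrict Ω)).toReal
              + |b.im| * (eLpNorm u 2 (volume.restrict Ω)).toReal ^ 2
            ≤ ∫ x, ‖F x * u x‖ ∂(volume.restrict Ω)) →
          (eLpNorm F ∞ (volume.restrict Ω)).toReal ≤ 1 / M →
          u =ᵐ[volume.restrict Ω] 0 := by
  obtain ⟨C, hC, hα, hβ⟩ := ((eventually_ge_atTop 0).and ((eventually_pos_add_mul_abs ha).and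
    (eventually_pos_add_mul_abs (p := b.re - Vn) (Or.inr hb)))).exists
  refine ⟨(1 + C) / (a.re + C * |a.im|), by positivity, ?_⟩
  intro N Ω _ F u du hF hu1 hu2 _ hE1 hE2 hFM
  set μ := volume.restrict Ω
  rw [toReal_eLpNorm hF.1, one_div_div, le_div_iff₀' (by positivity)] at hFM
  rw [toReal_eLpNorm hu1.1, toReal_eLpNorm hu2.1] at hE1 hE2
  have hcombined : (a.re + C * |a.im|) * lpNorm u 1 μ
      + (b.re - Vn + C * |b.im|) * lpNorm u 2 μ ^ 2 ≤ (1 + C) * ∫ x, ‖F x * u x‖ ∂μ := by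
    linarith [mul_le_mul_of_nonneg_left hE2 hC, sq_nonneg (eLpNorm du 2 μ).toReal]
  have hL1_cancel : (1 + C) * ∫ x, ‖F x * u x‖ ∂μ ≤ (a.re + C * |a.im|) * lpNorm u 1 μ :=
    calc (1 + C) * ∫ x, ‖F x * u x‖ ∂μ
        ≤ (1 + C) * (lpNorm F ∞ μ * lpNorm u 1 μ) := by
          gcongr; exact integral_norm_mul_le_lpNorm_top_mul_lpNorm_one hF hu1
      _ ≤ (a.re + C * |a.im|) * lpNorm u 1 μ := by
          rw [← mul_assoc]; exact mul_le_mul_of_nonneg_right hFM lpNorm_nonneg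
  have hL2 : lpNorm u 2 μ ^ 2 = 0 :=
    le_antisymm (nonpos_of_mul_nonpos_right (by linarith) hβ) (sq_nonneg _)
  exact (lpNorm_eq_zero hu2 two_ne_zero).mp (pow_eq_zero_iff two_ne_zero |>.mp hL2)

/-- Core of the null-solution theorem: if `u ∈ H¹(Ω) ∩ L¹(Ω)` satisfies the two energy
estimates, then there is `M > 0`, depending only on `a`, `b` and the `L^∞` bound of the
potential, such that `‖F‖_{L^∞} ≤ 1/M` forces `u = 0` a.e. in `Ω`. -/
theorem null_solution_from_energy_estimates
    (a b : ℂ) (ha : 0 < a.re ∨ a.im ≠ 0) (hb : b.im ≠ 0) (Vn : ℝ) (hVn : 0 ≤ Vn) :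
    ∃ M : ℝ, 0 < M ∧
      ∀ (N : ℕ) (Ω : Set (EuclideanSpace ℝ (Fin N))), IsOpen Ω →
        ∀ (F u : EuclideanSpace ℝ (Fin N) → ℂ)
          (du : EuclideanSpace ℝ (Fin N) → (EuclideanSpace ℝ (Fin N) →L[ℝ] ℂ)),
          MemLp F ∞ (volume.restrict Ω) →
          MemLp u 1 (volume.restrict Ω) →
          MemLp u 2 (volume.restrict Ω) →
          MemLp du 2 (volume.restrict Ω) →
          ((eLpNorm du 2 (volume.restrict Ω)).toReal ^ 2
              + a.re * (eLpNorm u 1 (volume.restrict Ω)).toReal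
              + (b.re - Vn) * (eLpNorm u 2 (volume.restrict Ω)).toReal ^ 2
            ≤ ∫ x, ‖F x * u x‖ ∂(volume.restrict Ω)) →
          (|a.im| * (eLpNorm u 1 (volume.restrict Ω)).toReal
              + |b.im| * (eLpNorm u 2 (volume.restrict Ω)).toReal ^ 2
            ≤ ∫ x, ‖F x * u x‖ ∂(volume.restrict Ω)) →
          (eLpNorm F ∞ (volume.restrict Ω)).toReal ≤ 1 / M →
          u =ᵐ[volume.restrict Ω] 0 :=
  null_solution_from_energy_estimates_general a b ha hb Vn
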